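/- arXiv:2210.04268 — 5 statements merged into one kernel-verified Lean document; each statement's English description precedes it below -/
import Mathlib

section
/- Shrinkage factor for strong signals (Proposition 1(a), known-variance form). Fix ε > 0. There exist constants γ > 0 and C > 0, depending only on σ, b and ε, such that for every integer p ≥ 2, every τ > 0, and every d ∈ ℝ with |d| ≥ (a/2 + ε)·√(τ (log p)/2), the random variable X ~ N(d, στ) satisfies E[1 − q(X)] ≤ C·p^{−γ}. -/
/-! Write `s = √(τ log p / 2)`. Since `1 - q = g₀/(g₀ + g₁) ≤ min(1, g₀/g₁)`, it suffices to split
on the event `|X| < (a + ε) s / 2`. That interval lies at distance at least `ε s / 2` from `d`, so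
its mass under `N(d, στ)` is `O(√(log p) · p^{-ε²/(16σ)})`; outside it the likelihood ratio
`g₀(|X|)/g₁(|X|) = exp((m² - 2m|X|)/(2τ))`, `m = a s`, is at most `p^{-εa/4}`. The factor
`√(log p)` is absorbed by halving the exponent. -/

open MeasureTheory ProbabilityTheory

/-- The constant `a = (2+b)√σ + √((2+b)²σ + 4)` from Proposition 1. -/
noncomputable def shrinkA (σ b : ℝ) : ℝ :=
  (2 + b) * Real.sqrt σ + Real.sqrt ((2 + b) ^ 2 * σ + 4)

/-- The shrinkage factor `q(x) = g₁(|x|)/(g₀(|x|) + g₁(|x|))`, where `g₀` is the density of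
`N(0, τ)` and `g₁` is the density of `N(a·√(τ log p / 2), τ)`. -/
noncomputable def shrinkQ (σ b : ℝ) (p : ℕ) (τ : ℝ) (x : ℝ) : ℝ :=
  gaussianPDFReal (shrinkA σ b * Real.sqrt (τ * Real.log p / 2)) τ.toNNReal |x| /
    (gaussianPDFReal 0 τ.toNNReal |x| +
      gaussianPDFReal (shrinkA σ b * Real.sqrt (τ * Real.log p / 2)) τ.toNNReal |x|)

open Real Set
open scoped NNReal

lemma Real.sqrt_log_le_rpow_div {x γ : ℝ} (hx : 0 ≤ x) (hγ : 0 < γ) :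
    √(log x) ≤ x ^ γ / √(2 * γ) := by
  calc √(log x) ≤ √(x ^ (2 * γ) / (2 * γ)) := sqrt_le_sqrt (log_le_rpow_div hx (by positivity))
    _ = x ^ γ / √(2 * γ) := by
      rw [sqrt_div' _ (by positivity), mul_comm, rpow_mul hx, rpow_two,
        sqrt_sq (by positivity)]

lemma MeasureTheory.integral_le_measureReal_add {α : Type*} [MeasurableSpace α]
    {μ : Measure α} [IsProbabilityMeasure μ] {f : α → ℝ} {S : Set α} {δ : ℝ}
    (hS : MeasurableSet S) (hδ : 0 ≤ δ) (hf0 : 0 ≤ f) (hf1 : ∀ x ∈ S, f x ≤ 1)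
    (hfδ : ∀ x ∉ S, f x ≤ δ) :
    ∫ x, f x ∂μ ≤ μ.real S + δ := by
  have hbound : ∀ x, f x ≤ S.indicator 1 x + δ := by
    intro x
    by_cases hx : x ∈ S
    · simp only [indicator_of_mem hx, Pi.one_apply]; linarith [hf1 x hx]
    · simpa [indicator_of_notMem hx] using hfδ x hx
  have hint : Integrable (S.indicator 1) μ := (integrable_const (1 : ℝ)).indicator hS
  calc ∫ x, f x ∂μ ≤ ∫ x, (S.indicator 1 x + δ) ∂μ :=
        integral_mono_of_nonneg (.of_forall hf0) (hint.add (integrable_const δ))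
          (.of_forall hbound)
    _ = μ.real S + δ := by
      rw [integral_add hint (integrable_const δ), integral_indicator_one hS]
      simp

namespace ProbabilityTheory

lemma gaussianPDFReal_le_of_le_abs_sub {μ r x : ℝ} (v : ℝ≥0) (hr : 0 ≤ r)
    (h : r ≤ |x - μ|) :
    gaussianPDFReal μ v x ≤ (√(2 * π * v))⁻¹ * exp (-r ^ 2 / (2 * v)) := by
  rw [gaussianPDFReal]
  have : r ^ 2 ≤ (x - μ) ^ 2 := sq_abs (x - μ) ▸ pow_le_pow_left₀ hr h 2
  gcongr

lemma gaussianPDFReal_div_gaussianPDFReal (μ₁ μ₂ : ℝ) {v : ℝ≥0} (hv : v ≠ 0) (x : ℝ) :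
    gaussianPDFReal μ₁ v x / gaussianPDFReal μ₂ v x =
      exp (((x - μ₂) ^ 2 - (x - μ₁) ^ 2) / (2 * v)) := by
  have : (√(2 * π * v))⁻¹ ≠ 0 := by positivity
  rw [gaussianPDFReal, gaussianPDFReal, mul_div_mul_left _ _ this, ← exp_sub]
  ring_nf

lemma gaussianPDFReal_zero_div_add_le {m t y : ℝ} {v : ℝ≥0} (hv : v ≠ 0) (hm : 0 ≤ m)
    (hty : t ≤ y) :
    gaussianPDFReal 0 v y / (gaussianPDFReal 0 v y + gaussianPDFReal m v y) ≤
      exp ((m ^ 2 - 2 * m * t) / (2 * v)) := by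
  have h₀ := gaussianPDFReal_pos 0 v y hv
  have h₁ := gaussianPDFReal_pos m v y hv
  calc gaussianPDFReal 0 v y / (gaussianPDFReal 0 v y + gaussianPDFReal m v y)
      ≤ gaussianPDFReal 0 v y / gaussianPDFReal m v y := by gcongr; linarith
    _ = exp ((m ^ 2 - 2 * m * y) / (2 * v)) := by
      rw [gaussianPDFReal_div_gaussianPDFReal 0 m hv]; ring_nf
    _ ≤ exp ((m ^ 2 - 2 * m * t) / (2 * v)) := by gcongr

lemma gaussianReal_real_Ioo_le {d t r : ℝ} {v : ℝ≥0} (hv : v ≠ 0) (ht : 0 ≤ t) (hr : 0 ≤ r)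
    (hd : t + r ≤ |d|) :
    (gaussianReal d v).real (Ioo (-t) t) ≤
      2 * t * ((√(2 * π * v))⁻¹ * exp (-r ^ 2 / (2 * v))) := by
  have hfar : ∀ x ∈ Ioo (-t) t, r ≤ |x - d| := fun x hx => by
    have := abs_sub_abs_le_abs_sub d x
    rw [abs_sub_comm]; linarith [abs_lt.mpr ⟨hx.1, hx.2⟩]
  rw [measureReal_def, gaussianReal_apply_eq_integral d hv,
    ENNReal.toReal_ofReal (setIntegral_nonneg measurableSet_Ioo
      fun x _ => gaussianPDFReal_nonneg d v x)]
  calc ∫ x in Ioo (-t) t, gaussianPDFReal d v x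
      ≤ ∫ _ in Ioo (-t) t, (√(2 * π * v))⁻¹ * exp (-r ^ 2 / (2 * v)) :=
        setIntegral_mono_on (integrable_gaussianPDFReal d v).integrableOn
          (integrableOn_const measure_Ioo_lt_top.ne) measurableSet_Ioo
          fun x hx => gaussianPDFReal_le_of_le_abs_sub v hr (hfar x hx)
    _ = 2 * t * ((√(2 * π * v))⁻¹ * exp (-r ^ 2 / (2 * v))) := by
      rw [setIntegral_const, measureReal_def, Real.volume_Ioo,
        ENNReal.toReal_ofReal (by linarith), smul_eq_mul]
      ring

end ProbabilityTheory

lemma shrinkA_pos {σ : ℝ} (b : ℝ) (hσ : 0 ≤ σ) : 0 < shrinkA σ b := by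
  have : |(2 + b) * √σ| < √((2 + b) ^ 2 * σ + 4) := by
    rw [← sqrt_sq_eq_abs, mul_pow, sq_sqrt hσ]
    exact sqrt_lt_sqrt (by positivity) (by linarith)
  rw [shrinkA]
  linarith [neg_abs_le ((2 + b) * √σ)]

lemma shrinkQ_nonneg (σ b : ℝ) (p : ℕ) (τ x : ℝ) : 0 ≤ shrinkQ σ b p τ x := by
  rw [shrinkQ]
  exact div_nonneg (gaussianPDFReal_nonneg _ _ _)
    (add_nonneg (gaussianPDFReal_nonneg _ _ _) (gaussianPDFReal_nonneg _ _ _))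

lemma shrinkQ_le_one (σ b : ℝ) (p : ℕ) (τ x : ℝ) : shrinkQ σ b p τ x ≤ 1 := by
  rw [shrinkQ]
  exact div_le_one_of_le₀ (le_add_of_nonneg_left (gaussianPDFReal_nonneg _ _ _))
    (add_nonneg (gaussianPDFReal_nonneg _ _ _) (gaussianPDFReal_nonneg _ _ _))

lemma one_sub_shrinkQ_le_exp {σ b τ t x : ℝ} (p : ℕ) (hσ : 0 ≤ σ) (hτ : 0 < τ) (htx : t ≤ |x|) :
    1 - shrinkQ σ b p τ x ≤
      exp (((shrinkA σ b * √(τ * log p / 2)) ^ 2 -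
        2 * (shrinkA σ b * √(τ * log p / 2)) * t) / (2 * τ)) := by
  have hv : τ.toNNReal ≠ 0 := by simpa using hτ
  have hm : 0 ≤ shrinkA σ b * √(τ * log p / 2) := by have := shrinkA_pos b hσ; positivity
  rw [shrinkQ]
  generalize shrinkA σ b * √(τ * log p / 2) = m at hm ⊢
  have hsum : 0 < gaussianPDFReal 0 τ.toNNReal |x| + gaussianPDFReal m τ.toNNReal |x| :=
    add_pos (gaussianPDFReal_pos 0 _ _ hv) (gaussianPDFReal_pos m _ _ hv)
  rw [one_sub_div hsum.ne', add_sub_cancel_right]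
  have := gaussianPDFReal_zero_div_add_le hv hm htx
  rwa [Real.coe_toNNReal τ hτ.le] at this

lemma integral_one_sub_shrinkQ_le {σ b ε τ d : ℝ} {p : ℕ} (hσ : 0 < σ) (hε : 0 < ε)
    (hp : 1 ≤ p) (hτ : 0 < τ)
    (hd : (shrinkA σ b / 2 + ε) * √(τ * log p / 2) ≤ |d|) :
    ∫ x, (1 - shrinkQ σ b p τ x) ∂(gaussianReal d (σ * τ).toNNReal) ≤
      (shrinkA σ b + ε) / √(2 * π * σ) * √(log p / 2) * (p : ℝ) ^ (-(ε ^ 2 / (16 * σ))) +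
        (p : ℝ) ^ (-(ε * shrinkA σ b / 4)) := by
  set A := shrinkA σ b with hA_def
  set s := √(τ * log p / 2) with hs_def
  have hA : 0 < A := shrinkA_pos b hσ.le
  have hp0 : (0 : ℝ) < p := by exact_mod_cast hp
  have hlog : 0 ≤ log p := log_nonneg (by exact_mod_cast hp)
  have hs2 : s ^ 2 = τ * log p / 2 := sq_sqrt (by positivity)
  have hv : (σ * τ).toNNReal ≠ 0 := by simpa using mul_pos hσ hτ
  have hexp (c : ℝ) : exp (-c * log p) = (p : ℝ) ^ (-c) := by
    rw [rpow_def_of_pos hp0, mul_comm]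
  refine integral_le_measureReal_add measurableSet_Ioo (by positivity)
    (fun x => sub_nonneg.mpr (shrinkQ_le_one σ b p τ x))
    (fun x _ => sub_le_self _ (shrinkQ_nonneg σ b p τ x)) (fun x hx => ?_) |>.trans
    (add_le_add ((gaussianReal_real_Ioo_le hv (t := (A + ε) / 2 * s) (r := ε / 2 * s)
      (by positivity) (by positivity) (by linarith)).trans_eq ?_) le_rfl)
  · have htx : (A + ε) / 2 * s ≤ |x| := by
      by_contra h
      exact hx ⟨by linarith [neg_abs_le x], by linarith [le_abs_self x]⟩
    refine (one_sub_shrinkQ_le_exp p hσ.le hτ htx).trans_eq ?_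
    rw [← hA_def, ← hs_def, ← hexp]
    congr 1
    field_simp
    linear_combination (-4 * ε) * hs2
  · have hr : -(ε / 2 * s) ^ 2 / (2 * (σ * τ)) = -(ε ^ 2 / (16 * σ)) * log p := by
      rw [mul_pow, hs2]; field_simp; ring
    have hsplit : √(2 * π * (σ * τ)) = √(2 * π * σ) * √τ := by
      rw [← sqrt_mul (by positivity)]; ring_nf
    have hs : s = √τ * √(log p / 2) := by rw [hs_def, ← sqrt_mul hτ.le, mul_div_assoc]
    rw [Real.coe_toNNReal _ (mul_pos hσ hτ).le, hr, hexp, hsplit, hs]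
    field_simp

theorem strong_signal_shrinkage_general (σ b ε : ℝ) (hσ : 0 < σ) (hε : 0 < ε) :
    ∃ γ > (0 : ℝ), ∃ C > (0 : ℝ), ∀ p : ℕ, 2 ≤ p → ∀ τ : ℝ, 0 < τ → ∀ d : ℝ,
      (shrinkA σ b / 2 + ε) * Real.sqrt (τ * Real.log p / 2) ≤ |d| →
      ∫ x, (1 - shrinkQ σ b p τ x) ∂(gaussianReal d (σ * τ).toNNReal) ≤ C * (p : ℝ) ^ (-γ) := by
  set A := shrinkA σ b
  have hA : 0 < A := shrinkA_pos b hσ.le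
  set γ := ε ^ 2 / (32 * σ)
  have hγ : 0 < γ := by positivity
  set K := (A + ε) / √(2 * π * σ)
  refine ⟨min γ (ε * A / 4), by positivity, K / √(2 * γ) + 1, by positivity,
    fun p hp τ hτ d hd => (integral_one_sub_shrinkQ_le hσ hε (by omega) hτ hd).trans ?_⟩
  have hp1 : (1 : ℝ) ≤ p := by exact_mod_cast (by omega : 1 ≤ p)
  have hp0 : (0 : ℝ) < p := by positivity
  have hlog : √(log p / 2) ≤ (p : ℝ) ^ γ / √(2 * γ) :=
    (sqrt_le_sqrt (by linarith [log_nonneg hp1])).trans (sqrt_log_le_rpow_div hp0.le hγ)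
  calc K * √(log p / 2) * (p : ℝ) ^ (-(ε ^ 2 / (16 * σ))) + (p : ℝ) ^ (-(ε * A / 4))
      ≤ K * ((p : ℝ) ^ γ / √(2 * γ)) * (p : ℝ) ^ (-(2 * γ)) + (p : ℝ) ^ (-(ε * A / 4)) := by
        rw [show ε ^ 2 / (16 * σ) = 2 * γ by ring]; gcongr
    _ = K / √(2 * γ) * (p : ℝ) ^ (-γ) + (p : ℝ) ^ (-(ε * A / 4)) := by
        rw [mul_div_assoc', mul_div_right_comm, mul_assoc, ← rpow_add hp0]; ring_nf
    _ ≤ (K / √(2 * γ) + 1) * (p : ℝ) ^ (-min γ (ε * A / 4)) := by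
        rw [add_mul, one_mul]
        gcongr
        exacts [min_le_left _ _, min_le_right _ _]

/-- **Shrinkage factor for strong signals** (Proposition 1(a), known-variance form).
There are constants `γ, C > 0` depending only on `σ, b, ε` such that for all `p ≥ 2`, `τ > 0`
and `|d| ≥ (a/2 + ε)·√(τ log p / 2)`, if `X ~ N(d, στ)` then `E[1 − q(X)] ≤ C·p^{−γ}`. -/
theorem strong_signal_shrinkage (σ b ε : ℝ) (hσ : 0 < σ) (hb : 0 < b) (hε : 0 < ε) :
    ∃ γ > (0 : ℝ), ∃ C > (0 : ℝ), ∀ p : ℕ, 2 ≤ p → ∀ τ : ℝ, 0 < τ → ∀ d : ℝ,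
      (shrinkA σ b / 2 + ε) * Real.sqrt (τ * Real.log p / 2) ≤ |d| →
      ∫ x, (1 - shrinkQ σ b p τ x) ∂(gaussianReal d (σ * τ).toNNReal) ≤ C * (p : ℝ) ^ (-γ) :=
  strong_signal_shrinkage_general σ b ε hσ hε
end

section
/- Shrinkage factor for weak signals (Proposition 1(c), known-variance form). Let p_n → ∞ be a sequence of integers, τ_n > 0, and d_n ∈ ℝ with d_n = o(√(τ_n log p_n)) as n → ∞. For each n let q_n be the shrinkage factor built with parameters (p_n, τ_n) and let X_n ~ N(d_n, σ τ_n). Then there exist γ > 0 and C > 0 such that E[q_n(X_n)] ≤ C·p_n^{−(1+γ)} for all sufficiently large n. -/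
open MeasureTheory ProbabilityTheory Filter Asymptotics
open scoped NNReal ENNReal

lemma gauss_complete_square (t m x : ℝ) {v : ℝ≥0} (hv : v ≠ 0) :
    Real.exp (t * x) * gaussianPDFReal m v x
      = Real.exp (t * m + t ^ 2 * v / 2) * gaussianPDFReal (m + t * v) v x := by
  have hv' : (v : ℝ) ≠ 0 := by exact_mod_cast hv
  simp only [gaussianPDFReal]
  rw [mul_left_comm, mul_left_comm (Real.exp _), ← Real.exp_add, ← Real.exp_add]
  congr 2
  field_simp
  ring

lemma integral_gaussianReal_eq (g : ℝ → ℝ) (m : ℝ) {v : ℝ≥0} (hv : v ≠ 0) :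
    ∫ x, g x ∂(gaussianReal m v) = ∫ x, gaussianPDFReal m v x * g x := by
  rw [gaussianReal_of_var_ne_zero _ hv]
  have h : gaussianPDF m v = fun x => ((gaussianPDFReal m v x).toNNReal : ℝ≥0∞) := rfl
  rw [h, integral_withDensity_eq_integral_smul
    (measurable_gaussianPDFReal m v).real_toNNReal]
  refine integral_congr_ae (Eventually.of_forall fun x => ?_)
  simp [NNReal.smul_def, Real.coe_toNNReal _ (gaussianPDFReal_nonneg m v x)]

lemma integrable_gaussianReal_of (g : ℝ → ℝ) (m : ℝ) {v : ℝ≥0} (hv : v ≠ 0)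
    (h : Integrable (fun x => gaussianPDFReal m v x * g x) volume) :
    Integrable g (gaussianReal m v) := by
  rw [gaussianReal_of_var_ne_zero _ hv]
  have hpdf : gaussianPDF m v = fun x => ((gaussianPDFReal m v x).toNNReal : ℝ≥0∞) := rfl
  rw [hpdf, integrable_withDensity_iff_integrable_smul
    (measurable_gaussianPDFReal m v).real_toNNReal]
  refine h.congr (Eventually.of_forall fun x => ?_)
  simp [NNReal.smul_def, Real.coe_toNNReal _ (gaussianPDFReal_nonneg m v x)]

lemma gauss_mgf_integrable (t m : ℝ) {v : ℝ≥0} (hv : v ≠ 0) :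
    Integrable (fun x => Real.exp (t * x)) (gaussianReal m v) := by
  refine integrable_gaussianReal_of _ m hv ?_
  refine ((integrable_gaussianPDFReal (m + t * v) v).const_mul
    (Real.exp (t * m + t ^ 2 * v / 2))).congr (Eventually.of_forall fun x => ?_)
  simp only [← gauss_complete_square t m x hv]; ring

lemma gauss_mgf_eq (t m : ℝ) {v : ℝ≥0} (hv : v ≠ 0) :
    ∫ x, Real.exp (t * x) ∂(gaussianReal m v) = Real.exp (t * m + t ^ 2 * v / 2) := by
  rw [integral_gaussianReal_eq _ m hv]
  have h : ∀ x, gaussianPDFReal m v x * Real.exp (t * x)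
      = Real.exp (t * m + t ^ 2 * v / 2) * gaussianPDFReal (m + t * v) v x := by
    intro x; rw [← gauss_complete_square t m x hv]; ring
  simp_rw [h]
  rw [MeasureTheory.integral_const_mul, integral_gaussianPDFReal_eq_one _ hv, mul_one]

lemma integral_exp_abs_le (t m : ℝ) (ht : 0 ≤ t) {v : ℝ≥0} (hv : v ≠ 0) :
    Integrable (fun x => Real.exp (t * |x|)) (gaussianReal m v) ∧
    ∫ x, Real.exp (t * |x|) ∂(gaussianReal m v)
      ≤ 2 * Real.exp (t * |m| + t ^ 2 * v / 2) := by
  have hI1 := gauss_mgf_integrable t m hv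
  have hI2 := gauss_mgf_integrable (-t) m hv
  have hsum := hI1.add hI2
  have hpt : ∀ x, Real.exp (t * |x|) ≤ Real.exp (t * x) + Real.exp (-t * x) := by
    intro x
    rcases abs_cases x with ⟨h, _⟩ | ⟨h, _⟩ <;> rw [h]
    · exact le_add_of_nonneg_right (Real.exp_pos _).le
    · rw [show t * -x = -t * x by ring]
      exact le_add_of_nonneg_left (Real.exp_pos _).le
  constructor
  · refine hsum.mono' ?_ (Eventually.of_forall fun x => ?_)
    · exact (Real.continuous_exp.comp (continuous_const.mul continuous_abs)).aestronglyMeasurable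
    · rw [Real.norm_eq_abs, abs_of_pos (Real.exp_pos _)]
      exact hpt x
  · have step : ∫ x, Real.exp (t * |x|) ∂(gaussianReal m v)
        ≤ ∫ x, (Real.exp (t * x) + Real.exp (-t * x)) ∂(gaussianReal m v) :=
      integral_mono_of_nonneg (Eventually.of_forall fun x => (Real.exp_pos _).le) hsum
        (Eventually.of_forall hpt)
    refine step.trans ?_
    rw [integral_add hI1 hI2, gauss_mgf_eq t m hv, gauss_mgf_eq (-t) m hv]
    have h1 : t * m ≤ t * |m| := mul_le_mul_of_nonneg_left (le_abs_self m) ht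
    have h2 : -t * m ≤ t * |m| := by
      rw [show -t * m = t * (-m) by ring]
      exact mul_le_mul_of_nonneg_left (neg_le_abs m) ht
    have e1 : Real.exp (t * m + t ^ 2 * v / 2) ≤ Real.exp (t * |m| + t ^ 2 * v / 2) :=
      Real.exp_le_exp.mpr (by linarith)
    have e2 : Real.exp (-t * m + (-t) ^ 2 * v / 2) ≤ Real.exp (t * |m| + t ^ 2 * v / 2) :=
      Real.exp_le_exp.mpr (by rw [neg_pow]; ring_nf; nlinarith [h2])
    linarith

lemma shrinkA_gt (σ b : ℝ) (hσ : 0 < σ) (hb : 0 < b) :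
    4 * Real.sqrt σ < shrinkA σ b ∧ 2 < shrinkA σ b ∧
    shrinkA σ b ^ 2 = 2 * ((2 + b) * Real.sqrt σ) * shrinkA σ b + 4 := by
  set s := Real.sqrt σ with hs
  have hs0 : 0 < s := Real.sqrt_pos.mpr hσ
  have hs2 : s ^ 2 = σ := Real.sq_sqrt hσ.le
  set u := (2 + b) * s with hu
  have hu0 : 0 < u := by positivity
  set w := Real.sqrt ((2 + b) ^ 2 * σ + 4) with hw
  have hw0 : 0 ≤ w := Real.sqrt_nonneg _
  have hw2 : w ^ 2 = u ^ 2 + 4 := by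
    rw [hw, Real.sq_sqrt (by positivity)]; rw [hu]; ring_nf; nlinarith [hs2]
  have hwu : u < w := by nlinarith
  have hw2' : 2 ≤ w := by nlinarith
  have hus : 2 * s < u := by nlinarith
  refine ⟨?_, ?_, ?_⟩
  · show 4 * s < u + w; nlinarith
  · show 2 < u + w; nlinarith
  · show (u + w) ^ 2 = 2 * u * (u + w) + 4; nlinarith

lemma shrink_key (σ b : ℝ) (hσ : 0 < σ) (hb : 0 < b) :
    1 < (min 1 (1 / (2 * σ)) - σ * min 1 (1 / (2 * σ)) ^ 2) * shrinkA σ b ^ 2 / 4 := by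
  obtain ⟨h4, h2, hsq⟩ := shrinkA_gt σ b hσ hb
  set a := shrinkA σ b
  have ha0 : 0 < a := by linarith
  have hs0 : 0 < Real.sqrt σ := Real.sqrt_pos.mpr hσ
  have hs2 : Real.sqrt σ ^ 2 = σ := Real.sq_sqrt hσ.le
  rcases le_total (1 / (2 * σ)) 1 with h | h
  · rw [min_eq_right h]
    have hσ2 : 1 / 2 ≤ σ := by
      rw [div_le_one (by positivity)] at h; linarith
    have heq : (1 / (2 * σ) - σ * (1 / (2 * σ)) ^ 2) = 1 / (4 * σ) := by
      field_simp; ring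
    rw [heq]
    rw [lt_div_iff₀ (by norm_num : (0:ℝ) < 4), one_div, inv_mul_eq_div,
      lt_div_iff₀ (by positivity : (0:ℝ) < 4 * σ)]
    nlinarith
  · rw [min_eq_left h]
    have hσ1 : σ ≤ 1 / 2 := by
      rw [le_div_iff₀ (by positivity)] at h; linarith
    rw [lt_div_iff₀ (by norm_num : (0:ℝ) < 4)]
    have hus : 2 * Real.sqrt σ < (2 + b) * Real.sqrt σ := by nlinarith
    have hss : σ < Real.sqrt σ := by nlinarith
    set u := (2 + b) * Real.sqrt σ with hu
    have hu0 : 0 < u := by positivity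
    have h1 : 4 * Real.sqrt σ < u * a := by nlinarith [mul_pos hs0 ha0]
    have h2' : 2 * σ < u * a * (1 - σ) := by
      nlinarith [h1, hss, mul_nonneg (mul_pos hu0 ha0).le (by linarith : (0:ℝ) ≤ 1/2 - σ)]
    have h3 := congrArg (fun z => (1 - σ) * z) hsq
    nlinarith [h3, h2']

lemma shrinkQ_le (σ b : ℝ) (p : ℕ) {τ θ : ℝ} (hτ : 0 < τ) (hθ0 : 0 ≤ θ) (hθ1 : θ ≤ 1)
    (x : ℝ) :
    shrinkQ σ b p τ x ≤ Real.exp (θ * ((shrinkA σ b * Real.sqrt (τ * Real.log p / 2) * |x|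
      - (shrinkA σ b * Real.sqrt (τ * Real.log p / 2)) ^ 2 / 2) / τ)) := by
  set m := shrinkA σ b * Real.sqrt (τ * Real.log p / 2) with hm
  have hτc : (τ.toNNReal : ℝ) = τ := Real.coe_toNNReal _ hτ.le
  have hne : τ.toNNReal ≠ 0 := by
    simp only [ne_eq, Real.toNNReal_eq_zero, not_le]; exact hτ
  set y := (m * |x| - m ^ 2 / 2) / τ with hy
  set g0 := gaussianPDFReal 0 τ.toNNReal |x| with hg0def
  have hg0 : 0 < g0 := gaussianPDFReal_pos _ _ _ hne
  have key : gaussianPDFReal m τ.toNNReal |x| = Real.exp y * g0 := by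
    rw [hg0def]
    simp only [gaussianPDFReal]
    rw [mul_left_comm, ← Real.exp_add]
    congr 2
    rw [hτc, hy, sub_zero]
    set z := |x|
    field_simp
    ring
  unfold shrinkQ
  rw [← hm, key, ← hg0def]
  have heq : Real.exp y * g0 / (g0 + Real.exp y * g0) = Real.exp y / (1 + Real.exp y) := by
    rw [show g0 + Real.exp y * g0 = (1 + Real.exp y) * g0 by ring,
      mul_div_mul_right _ _ (ne_of_gt hg0)]
  rw [heq]
  have hey : 0 < Real.exp y := Real.exp_pos y
  rcases le_or_gt y 0 with h | h
  · have h1 : Real.exp y / (1 + Real.exp y) ≤ Real.exp y :=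
      div_le_self hey.le (by linarith)
    refine h1.trans (Real.exp_le_exp.mpr ?_)
    nlinarith
  · have h1 : Real.exp y / (1 + Real.exp y) ≤ 1 := by
      rw [div_le_one (by linarith)]; linarith
    refine h1.trans (Real.one_le_exp ?_)
    positivity

/-- **Shrinkage factor for weak signals** (Proposition 1(c), known-variance form).
If `p_n → ∞`, `τ_n > 0` and `d_n = o(√(τ_n log p_n))`, then for `X_n ~ N(d_n, στ_n)` there are
`γ, C > 0` with `E[q_n(X_n)] ≤ C·p_n^{−(1+γ)}` for all sufficiently large `n`. -/
theorem weak_signal_shrinkage (σ b : ℝ) (hσ : 0 < σ) (hb : 0 < b)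
    (p : ℕ → ℕ) (hp : Tendsto p atTop atTop)
    (τ : ℕ → ℝ) (hτ : ∀ n, 0 < τ n)
    (d : ℕ → ℝ)
    (hd : (fun n => d n) =o[atTop] fun n => Real.sqrt (τ n * Real.log (p n))) :
    ∃ γ > (0 : ℝ), ∃ C > (0 : ℝ), ∀ᶠ n in atTop,
      ∫ x, shrinkQ σ b (p n) (τ n) x ∂(gaussianReal (d n) (σ * τ n).toNNReal)
        ≤ C * (p n : ℝ) ^ (-(1 + γ)) := by
  classical
  set a := shrinkA σ b with ha
  set θ := min 1 (1 / (2 * σ)) with hθ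
  have hθ0 : 0 < θ := lt_min one_pos (by positivity)
  have hθ1 : θ ≤ 1 := min_le_left _ _
  have hkey := shrink_key σ b hσ hb
  set K := θ - σ * θ ^ 2 with hK
  have ha0 : 0 < a := lt_trans two_pos (shrinkA_gt σ b hσ hb).2.1
  set γ := (K * a ^ 2 / 4 - 1) / 2 with hγdef
  have hγ : 0 < γ := by rw [hγdef]; linarith
  refine ⟨γ, hγ, 2, two_pos, ?_⟩
  set ε := Real.sqrt 2 * γ / (θ * a) with hε
  have hε0 : 0 < ε := by positivity
  have hd' := hd.def hε0
  have hp3 := hp.eventually_ge_atTop 3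
  filter_upwards [hd', hp3] with n hdn hpn
  have hτn := hτ n
  set L := Real.log (p n) with hL
  have hp3' : (3:ℝ) ≤ (p n : ℝ) := by exact_mod_cast hpn
  have hL1 : 1 ≤ L := by
    rw [hL, Real.le_log_iff_exp_le (by linarith)]
    exact (Real.exp_one_lt_d9.le.trans (by norm_num)).trans hp3'
  have hL0 : 0 < L := by linarith
  set μ := a * Real.sqrt (τ n * L / 2) with hμ
  have hμ0 : 0 ≤ μ := by positivity
  have hμsq : μ ^ 2 = a ^ 2 * (τ n * L / 2) := by
    rw [hμ, mul_pow, Real.sq_sqrt (by positivity)]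
  have hv : (σ * τ n).toNNReal ≠ 0 := by
    simp only [ne_eq, Real.toNNReal_eq_zero, not_le]; positivity
  have hvc : ((σ * τ n).toNNReal : ℝ) = σ * τ n := Real.coe_toNNReal _ (by positivity)
  set t := θ * μ / τ n with htdef
  have ht0 : 0 ≤ t := by positivity
  set c₀ := Real.exp (-(θ * μ ^ 2 / (2 * τ n))) with hc₀
  -- pointwise bound
  have hpt : ∀ x, shrinkQ σ b (p n) (τ n) x ≤ c₀ * Real.exp (t * |x|) := by
    intro x
    refine (shrinkQ_le σ b (p n) hτn hθ0.le hθ1 x).trans ?_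
    rw [hc₀, ← Real.exp_add]
    apply le_of_eq
    congr 1
    rw [← ha, ← hL, ← hμ, htdef]
    field_simp
    ring
  obtain ⟨hIexp, hIle⟩ := integral_exp_abs_le t (d n) ht0 hv
  have hq_nonneg : ∀ x, 0 ≤ shrinkQ σ b (p n) (τ n) x := by
    intro x
    unfold shrinkQ
    have h1 := gaussianPDFReal_nonneg (shrinkA σ b * Real.sqrt (τ n * Real.log (p n) / 2))
      (τ n).toNNReal |x|
    have h2 := gaussianPDFReal_nonneg 0 (τ n).toNNReal |x|
    positivity
  have step1 : ∫ x, shrinkQ σ b (p n) (τ n) x ∂(gaussianReal (d n) (σ * τ n).toNNReal)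
      ≤ c₀ * ∫ x, Real.exp (t * |x|) ∂(gaussianReal (d n) (σ * τ n).toNNReal) := by
    rw [← MeasureTheory.integral_const_mul]
    exact integral_mono_of_nonneg (Eventually.of_forall hq_nonneg)
      (hIexp.const_mul c₀) (Eventually.of_forall hpt)
  have step2 : c₀ * ∫ x, Real.exp (t * |x|) ∂(gaussianReal (d n) (σ * τ n).toNNReal)
      ≤ c₀ * (2 * Real.exp (t * |d n| + t ^ 2 * (σ * τ n) / 2)) := by
    rw [hvc] at hIle
    exact mul_le_mul_of_nonneg_left hIle (Real.exp_pos _).le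
  -- exponent computations
  have hdn' : |d n| ≤ ε * Real.sqrt (τ n * L) := by
    have h := hdn
    rwa [Real.norm_eq_abs, Real.norm_eq_abs, abs_of_nonneg (Real.sqrt_nonneg _)] at h
  have hmul : Real.sqrt (τ n * L) * Real.sqrt (τ n * L) = τ n * L :=
    Real.mul_self_sqrt (by positivity)
  have hsplit : Real.sqrt (τ n * L / 2) = Real.sqrt (τ n * L) / Real.sqrt 2 :=
    Real.sqrt_div (by positivity) 2
  have hs2 : (0:ℝ) < Real.sqrt 2 := by positivity
  have htd : t * |d n| ≤ γ * L := by
    calc t * |d n| ≤ t * (ε * Real.sqrt (τ n * L)) := mul_le_mul_of_nonneg_left hdn' ht0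
      _ = γ * L := by
          have h1 : t * (ε * Real.sqrt (τ n * L))
              = γ * (Real.sqrt (τ n * L) * Real.sqrt (τ n * L)) / τ n := by
            rw [htdef, hμ, hsplit, hε]
            field_simp
          rw [h1, hmul]
          field_simp
  have hquad : t ^ 2 * (σ * τ n) / 2 - θ * μ ^ 2 / (2 * τ n) = -(K * a ^ 2 / 4) * L := by
    have h1 : t ^ 2 * (σ * τ n) / 2 - θ * μ ^ 2 / (2 * τ n) = -(K * (μ ^ 2 / τ n)) / 2 := by
      rw [htdef, hK]
      field_simp
      ring
    have h2 : μ ^ 2 / τ n = a ^ 2 * L / 2 := by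
      rw [hμsq]
      field_simp
    rw [h1, h2]
    ring
  have hKa : -(K * a ^ 2 / 4) * L = -(1 + 2 * γ) * L := by rw [hγdef]; ring
  have hE : -(θ * μ ^ 2 / (2 * τ n)) + (t * |d n| + t ^ 2 * (σ * τ n) / 2) ≤ L * -(1 + γ) := by
    rw [hKa] at hquad
    linarith [htd, hquad]
  have hfinal : c₀ * (2 * Real.exp (t * |d n| + t ^ 2 * (σ * τ n) / 2))
      ≤ 2 * (p n : ℝ) ^ (-(1 + γ)) := by
    calc c₀ * (2 * Real.exp (t * |d n| + t ^ 2 * (σ * τ n) / 2))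
        = 2 * Real.exp (-(θ * μ ^ 2 / (2 * τ n)) + (t * |d n| + t ^ 2 * (σ * τ n) / 2)) := by
          rw [hc₀, mul_left_comm, ← Real.exp_add]
      _ ≤ 2 * Real.exp (L * -(1 + γ)) := by
          have := Real.exp_le_exp.mpr hE
          linarith
      _ = 2 * (p n : ℝ) ^ (-(1 + γ)) := by
          rw [Real.rpow_def_of_pos (by linarith : (0:ℝ) < (p n : ℝ)), ← hL]
  exact (step1.trans step2).trans hfinal
end

section
/- Stability of truncated scores under L² perturbation (Lemma 2). Let T be a random variable with values in [0,1] whose cumulative distribution function is continuous, and let (T̂_n) be random variables on the same probability space with values in [0,1] satisfying E[(T̂_n − T)²] → 0 as n → ∞. Fix constants α ∈ (0,1) and t ∈ (0,1), and set V := (T − α)·1(T < t) and V̂_n := (T̂_n − α)·1(T̂_n < t). Then E[(V̂_n − V)²] → 0 as n → ∞. -/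
/-!
Write `g x = (x - α)·1(x < t)`. On `[0,1]` the map `g` is 1-Lipschitz away from the jump at `t`,
and any jump of `g` between `T̂_n` and `T` has size at most `1`. Such a jump forces either
`|T̂_n - T| > δ` or `|T - t| ≤ δ`, so
`E[(V̂_n - V)²] ≤ (1 + δ⁻²) E[(T̂_n - T)²] + P(|T - t| ≤ δ)` for every `δ > 0`.
Continuity of the CDF means `T` has no atom at `t`, so the last term vanishes as `δ → 0⁺`.
-/

open MeasureTheory Filter Set Topology ProbabilityTheory

lemma tendsto_zero_of_le_mul_add {ι : Type*} {l : Filter ι} {a b : ι → ℝ} {C e : ℝ → ℝ}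
    (ha : ∀ i, 0 ≤ a i) (hb : Tendsto b l (𝓝 0)) (he : Tendsto e (𝓝[>] 0) (𝓝 0))
    (hle : ∀ δ > 0, ∀ i, a i ≤ C δ * b i + e δ) : Tendsto a l (𝓝 0) := by
  refine tendsto_order.2 ⟨fun ε hε => .of_forall fun i => hε.trans_le (ha i), fun ε hε => ?_⟩
  obtain ⟨δ, he_small, hδ⟩ :=
    ((he.eventually (gt_mem_nhds (half_pos hε))).and self_mem_nhdsWithin).exists
  have hCb : Tendsto (fun i => C δ * b i) l (𝓝 0) := by simpa using hb.const_mul (C δ)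
  filter_upwards [hCb.eventually (gt_mem_nhds (half_pos hε))] with i hCb_small
  linarith [hle δ hδ i]

lemma one_le_sq_div_add_indicator_of_separated {t δ x y : ℝ} (hδ : 0 < δ)
    (hsep : x < t ↔ ¬y < t) :
    1 ≤ (x - y) ^ 2 / δ ^ 2 + (Icc (t - δ) (t + δ)).indicator 1 y := by
  by_cases hy : y ∈ Icc (t - δ) (t + δ)
  · rw [indicator_of_mem hy, Pi.one_apply]
    linarith [div_nonneg (sq_nonneg (x - y)) (sq_nonneg δ)]
  · rw [indicator_of_notMem hy, add_zero, one_le_div (by positivity)]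
    have hfar : δ < |x - y| := by
      rw [mem_Icc, not_and_or, not_le, not_le] at hy
      rcases hy with hy | hy
      · have hx : t ≤ x := not_lt.1 fun hx => hsep.1 hx (by linarith)
        exact lt_abs.2 (Or.inl (by linarith))
      · have hx : x < t := hsep.2 (not_lt.2 (by linarith))
        exact lt_abs.2 (Or.inr (by linarith))
    nlinarith [abs_nonneg (x - y), sq_abs (x - y)]

lemma sq_sub_truncated_le {α t δ x y : ℝ} (hα : α ∈ Icc 0 1) (hx : x ∈ Icc 0 1)
    (hy : y ∈ Icc 0 1) (hδ : 0 < δ) :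
    ((if x < t then x - α else 0) - (if y < t then y - α else 0)) ^ 2 ≤
      (1 + 1 / δ ^ 2) * (x - y) ^ 2 + (Icc (t - δ) (t + δ)).indicator 1 y := by
  have hind : 0 ≤ (Icc (t - δ) (t + δ)).indicator (1 : ℝ → ℝ) y :=
    indicator_nonneg (fun _ _ => zero_le_one) y
  have hquot : 0 ≤ (x - y) ^ 2 / δ ^ 2 := by positivity
  have hexpand : (1 + 1 / δ ^ 2) * (x - y) ^ 2 = (x - y) ^ 2 + (x - y) ^ 2 / δ ^ 2 := by ring
  obtain ⟨hα0, hα1⟩ := hα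
  obtain ⟨hx0, hx1⟩ := hx
  obtain ⟨hy0, hy1⟩ := hy
  rw [hexpand]
  split_ifs with hxt hyt hyt
  · nlinarith
  · have := one_le_sq_div_add_indicator_of_separated (x := x) hδ (iff_of_true hxt hyt)
    nlinarith
  · have := one_le_sq_div_add_indicator_of_separated (x := x) hδ (iff_of_false hxt (not_not.2 hyt))
    nlinarith
  · nlinarith

lemma measure_singleton_eq_zero_of_continuous_cdf (μ : Measure ℝ) [IsProbabilityMeasure μ]
    (hμ : Continuous (cdf μ)) (x : ℝ) : μ {x} = 0 := by
  rw [← measure_cdf μ, StieltjesFunction.measure_singleton,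
    hμ.continuousWithinAt.leftLim_eq, sub_self, ENNReal.ofReal_zero]

section Integrals

variable {Ω : Type*} [MeasurableSpace Ω] (P : Measure Ω)

lemma tendsto_measureReal_preimage_Icc_of_map_singleton [IsFiniteMeasure P] {T : Ω → ℝ}
    (hT : Measurable T) {t : ℝ} (hatom : P.map T {t} = 0) :
    Tendsto (fun δ => P.real (T ⁻¹' Icc (t - δ) (t + δ))) (𝓝[>] 0) (𝓝 0) := by
  have h := (ENNReal.tendsto_toReal (measure_ne_top (P.map T) {t})).comp
    (tendsto_measure_Icc_nhdsWithin_right' (P.map T) t)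
  rw [hatom, ENNReal.toReal_zero] at h
  refine h.congr fun δ => ?_
  rw [Function.comp_apply, ← measureReal_def, map_measureReal_apply hT measurableSet_Icc]

lemma integral_sq_sub_truncated_le [IsFiniteMeasure P] {X Y : Ω → ℝ} (hX : Measurable X)
    (hY : Measurable Y) (hXrange : ∀ ω, X ω ∈ Icc 0 1) (hYrange : ∀ ω, Y ω ∈ Icc 0 1)
    {α : ℝ} (hα : α ∈ Icc 0 1) (t : ℝ) {δ : ℝ} (hδ : 0 < δ) :
    ∫ ω, ((if X ω < t then X ω - α else 0) - (if Y ω < t then Y ω - α else 0)) ^ 2 ∂P ≤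
      (1 + 1 / δ ^ 2) * ∫ ω, (X ω - Y ω) ^ 2 ∂P + P.real (Y ⁻¹' Icc (t - δ) (t + δ)) := by
  have hsq_int : Integrable (fun ω => (X ω - Y ω) ^ 2) P := by
    refine .of_bound ((hX.sub hY).pow_const 2).aestronglyMeasurable 1 (ae_of_all _ fun ω => ?_)
    obtain ⟨⟨hX0, hX1⟩, ⟨hY0, hY1⟩⟩ := And.intro (hXrange ω) (hYrange ω)
    rw [Real.norm_eq_abs, abs_of_nonneg (sq_nonneg _)]
    nlinarith
  have hmeas : MeasurableSet (Y ⁻¹' Icc (t - δ) (t + δ)) := hY measurableSet_Icc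
  have hind_int : Integrable ((Y ⁻¹' Icc (t - δ) (t + δ)).indicator 1) P :=
    (integrable_const (1 : ℝ)).indicator hmeas
  calc _ ≤ ∫ ω, ((1 + 1 / δ ^ 2) * (X ω - Y ω) ^ 2
          + (Y ⁻¹' Icc (t - δ) (t + δ)).indicator 1 ω) ∂P :=
        integral_mono_of_nonneg (ae_of_all _ fun _ => sq_nonneg _)
          ((hsq_int.const_mul _).add hind_int)
          (ae_of_all _ fun ω => sq_sub_truncated_le hα (hXrange ω) (hYrange ω) hδ)
    _ = _ := by
      rw [integral_add (hsq_int.const_mul _) hind_int,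
        integral_const_mul, integral_indicator_one hmeas]

end Integrals

theorem truncated_score_stability_general {Ω : Type*} [MeasurableSpace Ω]
    (P : Measure Ω) [IsProbabilityMeasure P]
    (T : Ω → ℝ) (hT : Measurable T) (hTrange : ∀ ω, T ω ∈ Set.Icc (0 : ℝ) 1)
    (hcdf : Continuous fun t : ℝ => (P {ω | T ω ≤ t}).toReal)
    (That : ℕ → Ω → ℝ) (hThat : ∀ n, Measurable (That n))
    (hThatrange : ∀ n ω, That n ω ∈ Set.Icc (0 : ℝ) 1)
    (hL2 : Tendsto (fun n => ∫ ω, (That n ω - T ω) ^ 2 ∂P) atTop (nhds 0))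
    (α t : ℝ) (hα : α ∈ Set.Ioo (0 : ℝ) 1) :
    Tendsto
      (fun n => ∫ ω,
        ((if That n ω < t then That n ω - α else 0) - (if T ω < t then T ω - α else 0)) ^ 2 ∂P)
      atTop (nhds 0) := by
  have := Measure.isProbabilityMeasure_map (μ := P) hT.aemeasurable
  have hcdf_map : cdf (P.map T) = fun x : ℝ => (P {ω | T ω ≤ x}).toReal := by
    funext x
    rw [cdf_eq_real, measureReal_def, Measure.map_apply hT measurableSet_Iic]
    rfl
  have hatom : P.map T {t} = 0 :=
    measure_singleton_eq_zero_of_continuous_cdf _ (hcdf_map ▸ hcdf) t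
  exact tendsto_zero_of_le_mul_add (C := fun δ => 1 + 1 / δ ^ 2)
    (fun _ => integral_nonneg fun _ => sq_nonneg _) hL2
    (tendsto_measureReal_preimage_Icc_of_map_singleton P hT hatom)
    fun δ hδ n => integral_sq_sub_truncated_le P (hThat n) hT (hThatrange n) hTrange
      (Ioo_subset_Icc_self hα) t hδ

/-- **Stability of truncated scores under L² perturbation** (Lemma 2).
If `T ∈ [0,1]` has a continuous CDF, `T̂_n ∈ [0,1]` satisfy `E[(T̂_n − T)²] → 0`, and
`V := (T − α)·1(T < t)`, `V̂_n := (T̂_n − α)·1(T̂_n < t)`, then `E[(V̂_n − V)²] → 0`. -/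
theorem truncated_score_stability {Ω : Type*} [MeasurableSpace Ω]
    (P : Measure Ω) [IsProbabilityMeasure P]
    (T : Ω → ℝ) (hT : Measurable T) (hTrange : ∀ ω, T ω ∈ Set.Icc (0 : ℝ) 1)
    (hcdf : Continuous fun t : ℝ => (P {ω | T ω ≤ t}).toReal)
    (That : ℕ → Ω → ℝ) (hThat : ∀ n, Measurable (That n))
    (hThatrange : ∀ n ω, That n ω ∈ Set.Icc (0 : ℝ) 1)
    (hL2 : Tendsto (fun n => ∫ ω, (That n ω - T ω) ^ 2 ∂P) atTop (nhds 0))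
    (α t : ℝ) (hα : α ∈ Set.Ioo (0 : ℝ) 1) (ht : t ∈ Set.Ioo (0 : ℝ) 1) :
    Tendsto
      (fun n => ∫ ω,
        ((if That n ω < t then That n ω - α else 0) - (if T ω < t then T ω - α else 0)) ^ 2 ∂P)
      atTop (nhds 0) :=
  truncated_score_stability_general P T hT hTrange hcdf That hThat hThatrange hL2 α t hα
end

section
/- Swap inequality for thresholding rules (Part (b) of the proof of Theorem 1). Let T be a random variable with values in [0,1], let α ∈ (0,1) and t ∈ (α, 1), and suppose E[(T − α)·1(T < t)] = 0. Then for every {0,1}-valued random variable B defined on the same probability space with E[(T − α)·B] ≤ 0, one has E[(1 − T)·1(T < t)] ≥ E[(1 − T)·B]. -/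
open MeasureTheory

lemma integrable_of_bdd' {Ω : Type*} [MeasurableSpace Ω] (P : Measure Ω)
    [IsFiniteMeasure P] {f : Ω → ℝ} (hf : Measurable f) (C : ℝ)
    (h : ∀ ω, |f ω| ≤ C) : Integrable f P :=
  ⟨hf.aestronglyMeasurable, HasFiniteIntegral.of_bounded (ae_of_all _ h)⟩

/-- **Swap inequality for thresholding rules** (Part (b) of the proof of Theorem 1).
If `T ∈ [0,1]`, `α ∈ (0,1)`, `t ∈ (α,1)`, `E[(T − α)·1(T < t)] = 0`, and `B` is any
`{0,1}`-valued random variable with `E[(T − α)·B] ≤ 0`, then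
`E[(1 − T)·1(T < t)] ≥ E[(1 − T)·B]`. -/
theorem swap_inequality {Ω : Type*} [MeasurableSpace Ω]
    (P : Measure Ω) [IsProbabilityMeasure P]
    (T : Ω → ℝ) (hT : Measurable T) (hTrange : ∀ ω, T ω ∈ Set.Icc (0 : ℝ) 1)
    (α t : ℝ) (hα : α ∈ Set.Ioo (0 : ℝ) 1) (ht : t ∈ Set.Ioo α 1)
    (hzero : ∫ ω, (if T ω < t then T ω - α else 0) ∂P = 0)
    (B : Ω → ℝ) (hB : Measurable B) (hBval : ∀ ω, B ω = 0 ∨ B ω = 1)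
    (hBbudget : ∫ ω, (T ω - α) * B ω ∂P ≤ 0) :
    ∫ ω, (1 - T ω) * B ω ∂P ≤ ∫ ω, (if T ω < t then 1 - T ω else 0) ∂P := by
  obtain ⟨hα0, hα1⟩ := hα
  obtain ⟨htα, ht1⟩ := ht
  have hta : (0:ℝ) < t - α := by linarith
  have h1t : (0:ℝ) < 1 - t := by linarith
  have hset : MeasurableSet {ω | T ω < t} := measurableSet_lt hT measurable_const
  -- f and g
  set f : Ω → ℝ := fun ω => (1 - T ω) * ((if T ω < t then 1 else 0) - B ω) with hfdef
  set g : Ω → ℝ := fun ω => (T ω - α) * ((if T ω < t then 1 else 0) - B ω) with hgdef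
  have hmind : Measurable fun ω => (if T ω < t then (1:ℝ) else 0) :=
    Measurable.ite hset measurable_const measurable_const
  have hmf : Measurable f := (measurable_const.sub hT).mul (hmind.sub hB)
  have hmg : Measurable g := (hT.sub measurable_const).mul (hmind.sub hB)
  have hbd : ∀ ω, |f ω| ≤ 2 ∧ |g ω| ≤ 2 := by
    intro ω
    obtain ⟨h0, h1⟩ := hTrange ω
    rcases hBval ω with h | h <;> by_cases hlt : T ω < t <;>
      simp only [hfdef, hgdef, h, hlt, if_pos, if_neg, ite_true, ite_false] <;>
      constructor <;> rw [abs_le] <;> constructor <;> nlinarith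
  have hintf : Integrable f P := integrable_of_bdd' P hmf 2 fun ω => (hbd ω).1
  have hintg : Integrable g P := integrable_of_bdd' P hmg 2 fun ω => (hbd ω).2
  have hintA : Integrable (fun ω => if T ω < t then 1 - T ω else 0) P := by
    refine integrable_of_bdd' P (Measurable.ite hset (measurable_const.sub hT)
      measurable_const) 2 fun ω => ?_
    obtain ⟨h0, h1⟩ := hTrange ω
    by_cases hlt : T ω < t <;> simp [hlt] <;> rw [abs_le] <;> constructor <;> nlinarith
  have hintC : Integrable (fun ω => (1 - T ω) * B ω) P := by
    refine integrable_of_bdd' P ((measurable_const.sub hT).mul hB) 2 fun ω => ?_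
    obtain ⟨h0, h1⟩ := hTrange ω
    rcases hBval ω with h | h <;> simp [h] <;> rw [abs_le] <;> constructor <;> nlinarith
  have hintD : Integrable (fun ω => (T ω - α) * B ω) P := by
    refine integrable_of_bdd' P ((hT.sub measurable_const).mul hB) 2 fun ω => ?_
    obtain ⟨h0, h1⟩ := hTrange ω
    rcases hBval ω with h | h <;> simp [h] <;> rw [abs_le] <;> constructor <;> nlinarith
  -- integral of f as a difference
  have hfeq : ∀ ω, f ω = (if T ω < t then 1 - T ω else 0) - (1 - T ω) * B ω := by
    intro ω; by_cases hlt : T ω < t <;> simp [hfdef, hlt] <;> ring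
  have hgeq : ∀ ω, g ω = (if T ω < t then T ω - α else 0) - (T ω - α) * B ω := by
    intro ω; by_cases hlt : T ω < t <;> simp [hgdef, hlt] <;> ring
  have hIf : ∫ ω, f ω ∂P
      = (∫ ω, (if T ω < t then 1 - T ω else 0) ∂P) - ∫ ω, (1 - T ω) * B ω ∂P := by
    rw [show f = fun ω => (if T ω < t then 1 - T ω else 0) - (1 - T ω) * B ω from
      funext hfeq]
    exact integral_sub hintA hintC
  have hIg : ∫ ω, g ω ∂P
      = (∫ ω, (if T ω < t then T ω - α else 0) ∂P) - ∫ ω, (T ω - α) * B ω ∂P := by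
    rw [show g = fun ω => (if T ω < t then T ω - α else 0) - (T ω - α) * B ω from
      funext hgeq]
    exact integral_sub (by
      refine integrable_of_bdd' P (Measurable.ite hset (hT.sub measurable_const)
        measurable_const) 2 fun ω => ?_
      obtain ⟨h0, h1⟩ := hTrange ω
      by_cases hlt : T ω < t <;> simp [hlt] <;> rw [abs_le] <;> constructor <;> nlinarith)
      hintD
  have hgnonneg : 0 ≤ ∫ ω, g ω ∂P := by rw [hIg, hzero]; linarith
  -- pointwise key inequality
  have key : ∀ ω, (1 - t) * g ω ≤ (t - α) * f ω := by
    intro ω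
    obtain ⟨h0, h1⟩ := hTrange ω
    rcases hBval ω with h | h <;> by_cases hlt : T ω < t <;>
      simp only [hfdef, hgdef, h, hlt, ite_true, ite_false] <;> nlinarith
  have hmono : ∫ ω, (1 - t) * g ω ∂P ≤ ∫ ω, (t - α) * f ω ∂P :=
    integral_mono (hintg.const_mul _) (hintf.const_mul _) key
  rw [integral_const_mul, integral_const_mul] at hmono
  have hfnonneg : 0 ≤ ∫ ω, f ω ∂P := by nlinarith
  rw [hIf] at hfnonneg
  linarith
end

section
/- Selection under an almost-sure conditional-probability budget controls both FSR and mFSR (key step in the proof of Theorem 2). Suppose the {0,2}-valued random variables δ_1,…,δ_m are measurable with respect to σ(𝒲) and satisfy, almost surely, Σ_{j=1}^m T^j·1(δ_j = 2) ≤ α·Σ_{j=1}^m 1(δ_j = 2) for a constant α ∈ (0,1). Then (i) E[ Σ_{j=1}^m 1(δ_j = 2, θ_j = 1) / max(Σ_{j=1}^m 1(δ_j = 2), 1) ] ≤ α, and (ii) E[Σ_{j=1}^m 1(δ_j = 2, θ_j = 1)] ≤ α·E[Σ_{j=1}^m 1(δ_j = 2)]. -/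
/-!
Since each `δ_j` is `σ(𝒲)`-measurable and `T^j` is a version of `E[1(θ_j = 1) | 𝒲]`, the tower
property gives, for every bounded `σ(𝒲)`-measurable weight `c`,
`E[c · Σ_j 1(δ_j = 2, θ_j = 1)] = E[c · Σ_j T^j 1(δ_j = 2)]`.
With `R = Σ_j 1(δ_j = 2)`, take `c = 1 / max(R, 1)` for the FSR and `c = 1` for the mFSR; the
budget bounds the right-hand integrands by `α R / max(R, 1) ≤ α` and by `α R` respectively.
-/

open MeasureTheory

section CondExp

variable {Ω ι : Type*} {m m₀ : MeasurableSpace Ω} {μ : Measure Ω}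

theorem integral_mul_eq_of_forall_setIntegral_eq (hm : m ≤ m₀) [SigmaFinite (μ.trim hm)]
    {f g h : Ω → ℝ} (hf : Integrable f μ) (hg : StronglyMeasurable[m] g) (hgi : Integrable g μ)
    (hgf : ∀ s, MeasurableSet[m] s → ∫ x in s, g x ∂μ = ∫ x in s, f x ∂μ)
    (hh : StronglyMeasurable[m] h) (hhf : Integrable (h * f) μ) :
    ∫ x, h x * f x ∂μ = ∫ x, h x * g x ∂μ := by
  have hg_condExp : g =ᵐ[μ] μ[f | m] :=
    ae_eq_condExp_of_forall_setIntegral_eq hm hf (fun _ _ _ ↦ hgi.integrableOn)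
      (fun s hs _ ↦ hgf s hs) hg.aestronglyMeasurable
  calc ∫ x, h x * f x ∂μ = ∫ x, μ[h * f | m] x ∂μ := (integral_condExp hm).symm
    _ = ∫ x, h x * μ[f | m] x ∂μ :=
      integral_congr_ae (condExp_mul_of_stronglyMeasurable_left hh hhf hf)
    _ = ∫ x, h x * g x ∂μ := integral_congr_ae (Filter.EventuallyEq.rfl.mul hg_condExp.symm)

theorem integral_mul_sum_ite_and_eq_of_condProb [IsFiniteMeasure μ] (hm : m ≤ m₀) (s : Finset ι)
    (p q : ι → Ω → Prop) [∀ i, DecidablePred (p i)] [∀ i, DecidablePred (q i)]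
    (hp : ∀ i, MeasurableSet[m] {x | p i x}) (hq : ∀ i, MeasurableSet {x | q i x})
    {T : ι → Ω → ℝ} (hT : ∀ i, StronglyMeasurable[m] (T i)) (hT_int : ∀ i, Integrable (T i) μ)
    (hT_condProb : ∀ i t, MeasurableSet[m] t → ∫ x in t, T i x ∂μ = μ.real (t ∩ {x | q i x}))
    {c : Ω → ℝ} (hc : StronglyMeasurable[m] c) {C : ℝ} (hC : ∀ᵐ x ∂μ, ‖c x‖ ≤ C) :
    ∫ x, c x * ∑ i ∈ s, (if p i x ∧ q i x then 1 else 0) ∂μ =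
      ∫ x, c x * ∑ i ∈ s, T i x * (if p i x then 1 else 0) ∂μ := by
  have : IsFiniteMeasure (μ.trim hm) := isFiniteMeasure_trim hm
  set w : ι → Ω → ℝ := fun i x ↦ c x * if p i x then 1 else 0
  have hw (i : ι) : StronglyMeasurable[m] (w i) :=
    hc.mul (stronglyMeasurable_const.ite (hp i) stronglyMeasurable_const)
  have hwC (i : ι) : ∀ᵐ x ∂μ, ‖w i x‖ ≤ C := hC.mono fun x hx ↦ by
    rw [norm_mul]
    exact (mul_le_of_le_one_right (norm_nonneg _) (by split_ifs <;> simp)).trans hx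
  have hw_mul_int {u : ι → Ω → ℝ} (hu : ∀ i, Integrable (u i) μ) (i : ι) :
      Integrable (fun x ↦ w i x * u i x) μ :=
    (hu i).bdd_mul ((hw i).mono hm).aestronglyMeasurable (hwC i)
  have hind (i : ι) : (fun x ↦ if q i x then (1 : ℝ) else 0) = {x | q i x}.indicator 1 := by
    ext x; simp [Set.indicator_apply]
  have hq_int (i : ι) : Integrable (fun x ↦ if q i x then (1 : ℝ) else 0) μ := by
    rw [hind]; exact (integrable_const (1 : ℝ)).indicator (hq i)
  calc ∫ x, c x * ∑ i ∈ s, (if p i x ∧ q i x then 1 else 0) ∂μ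
      = ∫ x, ∑ i ∈ s, w i x * (if q i x then 1 else 0) ∂μ := by
        simp only [w, Finset.mul_sum, mul_assoc, ite_zero_mul_ite_zero, one_mul]
    _ = ∫ x, ∑ i ∈ s, w i x * T i x ∂μ := by
        rw [integral_finsetSum s fun i _ ↦ hw_mul_int hq_int i,
          integral_finsetSum s fun i _ ↦ hw_mul_int hT_int i]
        refine Finset.sum_congr rfl fun i _ ↦ integral_mul_eq_of_forall_setIntegral_eq hm
          (hq_int i) (hT i) (hT_int i) (fun t ht ↦ ?_) (hw i) (hw_mul_int hq_int i)
        rw [hT_condProb i t ht, hind, integral_indicator_one (hq i),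
          measureReal_restrict_apply (hq i), Set.inter_comm]
    _ = ∫ x, c x * ∑ i ∈ s, T i x * (if p i x then 1 else 0) ∂μ := by
        congr with x
        rw [Finset.mul_sum]
        exact Finset.sum_congr rfl fun i _ ↦ by ring

theorem integral_div_max_one_le_of_le_mul [IsProbabilityMeasure μ] {X D : Ω → ℝ} {c : ℝ}
    (hc : 0 ≤ c) (hX : 0 ≤ᵐ[μ] X) (hXD : ∀ᵐ x ∂μ, X x ≤ c * D x) :
    ∫ x, X x / max (D x) 1 ∂μ ≤ c := by
  have hle : ∀ᵐ x ∂μ, X x / max (D x) 1 ≤ c := hXD.mono fun x hx ↦ by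
    rw [div_le_iff₀ (by positivity)]
    exact hx.trans (mul_le_mul_of_nonneg_left (le_max_left _ 1) hc)
  calc ∫ x, X x / max (D x) 1 ∂μ ≤ ∫ _, c ∂μ := integral_mono_of_nonneg
        (hX.mono fun x hx ↦ div_nonneg hx (by positivity)) (integrable_const c) hle
    _ = c := by simp

end CondExp

theorem budget_controls_FSR_and_mFSR_general {Ω 𝒲 : Type*} [MeasurableSpace Ω] [MeasurableSpace 𝒲]
    (P : Measure Ω) [IsProbabilityMeasure P] {m : ℕ}
    (W : Ω → 𝒲) (hW : Measurable W)
    (θ : Fin m → Ω → ℕ) (hθmeas : ∀ j, Measurable (θ j))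
    (T : Fin m → Ω → ℝ)
    (hTmeas : ∀ j, Measurable[MeasurableSpace.comap W inferInstance] (T j))
    (hTrange : ∀ j ω, T j ω ∈ Set.Icc (0 : ℝ) 1)
    (hTver : ∀ j, ∀ A : Set 𝒲, MeasurableSet A →
      ∫ ω in W ⁻¹' A, T j ω ∂P = (P (W ⁻¹' A ∩ {ω | θ j ω = 1})).toReal)
    (δ : Fin m → Ω → ℕ)
    (hδmeas : ∀ j, Measurable[MeasurableSpace.comap W inferInstance] (δ j))
    (α : ℝ) (hα : α ∈ Set.Ioo (0 : ℝ) 1)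
    (hbudget : ∀ᵐ ω ∂P,
      (∑ j, T j ω * (if δ j ω = 2 then 1 else 0)) ≤
        α * ∑ j, (if δ j ω = 2 then (1 : ℝ) else 0)) :
    (∫ ω, (∑ j, if δ j ω = 2 ∧ θ j ω = 1 then (1 : ℝ) else 0) /
        max (∑ j, if δ j ω = 2 then (1 : ℝ) else 0) 1 ∂P) ≤ α ∧
    (∫ ω, (∑ j, if δ j ω = 2 ∧ θ j ω = 1 then (1 : ℝ) else 0) ∂P) ≤
      α * ∫ ω, (∑ j, if δ j ω = 2 then (1 : ℝ) else 0) ∂P := by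
  have hle := hW.comap_le
  have hT_int (j : Fin m) : Integrable (T j) P :=
    .of_bound ((hTmeas j).stronglyMeasurable.mono hle).aestronglyMeasurable 1
      (ae_of_all _ fun ω ↦ (Real.norm_of_nonneg (hTrange j ω).1).trans_le (hTrange j ω).2)
  have tower := fun c ↦ integral_mul_sum_ite_and_eq_of_condProb (c := c) hle Finset.univ
    (fun j ω ↦ δ j ω = 2) (fun j ω ↦ θ j ω = 1) (fun j ↦ hδmeas j (measurableSet_singleton 2))
    (fun j ↦ hθmeas j (measurableSet_singleton 1)) (fun j ↦ (hTmeas j).stronglyMeasurable) hT_int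
    (by rintro j _ ⟨A, hA, rfl⟩; exact hTver j A hA)
  set D : Ω → ℝ := fun ω ↦ ∑ j, if δ j ω = 2 then (1 : ℝ) else 0
  have hsel (j : Fin m) :
      Measurable[MeasurableSpace.comap W inferInstance] fun ω ↦ if δ j ω = 2 then (1 : ℝ) else 0 :=
    measurable_const.ite (hδmeas j (measurableSet_singleton 2)) measurable_const
  have hD : Measurable[MeasurableSpace.comap W inferInstance] D :=
    Finset.measurable_sum _ fun j _ ↦ hsel j
  have hTsel_nonneg : 0 ≤ᵐ[P] fun ω ↦ ∑ j, T j ω * (if δ j ω = 2 then 1 else 0) :=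
    ae_of_all _ fun ω ↦ Finset.sum_nonneg fun j _ ↦ mul_nonneg (hTrange j ω).1 (by positivity)
  have hD_int : Integrable D P := integrable_finsetSum _ fun j _ ↦
    .of_bound ((hsel j).mono hle le_rfl).aestronglyMeasurable 1
      (ae_of_all _ fun ω ↦ by split_ifs <;> simp)
  constructor
  · have hFSR := tower (fun ω ↦ (max (D ω) 1)⁻¹) (hD.max measurable_const).inv.stronglyMeasurable
      (C := 1) (ae_of_all _ fun ω ↦ by
        rw [norm_inv]; exact inv_le_one_of_one_le₀ ((le_max_right _ _).trans (Real.le_norm_self _)))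
    simp only [inv_mul_eq_div] at hFSR
    rw [hFSR]
    exact integral_div_max_one_le_of_le_mul hα.1.le hTsel_nonneg hbudget
  · have hmFSR := tower (fun _ ↦ 1) stronglyMeasurable_const (C := 1) (ae_of_all _ fun _ ↦ by simp)
    simp only [one_mul] at hmFSR
    rw [hmFSR, ← integral_const_mul]
    exact integral_mono_of_nonneg hTsel_nonneg (hD_int.const_mul α) hbudget

/-- **Selection under an almost-sure conditional-probability budget controls both FSR and mFSR**
(key step in the proof of Theorem 2).  Here `T^j` is a version of `P(θ_j = 1 | 𝒲)`, the
`{0,2}`-valued selections `δ_j` are `σ(𝒲)`-measurable, and a.s.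
`Σ_j T^j·1(δ_j = 2) ≤ α·Σ_j 1(δ_j = 2)`; then both the FSR-type and the mFSR-type quantities
for class 2 are bounded by `α`. -/
theorem budget_controls_FSR_and_mFSR {Ω 𝒲 : Type*} [MeasurableSpace Ω] [MeasurableSpace 𝒲]
    (P : Measure Ω) [IsProbabilityMeasure P] {m : ℕ}
    (W : Ω → 𝒲) (hW : Measurable W)
    (θ : Fin m → Ω → ℕ) (hθmeas : ∀ j, Measurable (θ j))
    (hθval : ∀ j ω, θ j ω = 1 ∨ θ j ω = 2)
    (T : Fin m → Ω → ℝ)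
    (hTmeas : ∀ j, Measurable[MeasurableSpace.comap W inferInstance] (T j))
    (hTrange : ∀ j ω, T j ω ∈ Set.Icc (0 : ℝ) 1)
    (hTver : ∀ j, ∀ A : Set 𝒲, MeasurableSet A →
      ∫ ω in W ⁻¹' A, T j ω ∂P = (P (W ⁻¹' A ∩ {ω | θ j ω = 1})).toReal)
    (δ : Fin m → Ω → ℕ)
    (hδval : ∀ j ω, δ j ω = 0 ∨ δ j ω = 2)
    (hδmeas : ∀ j, Measurable[MeasurableSpace.comap W inferInstance] (δ j))
    (α : ℝ) (hα : α ∈ Set.Ioo (0 : ℝ) 1)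
    (hbudget : ∀ᵐ ω ∂P,
      (∑ j, T j ω * (if δ j ω = 2 then 1 else 0)) ≤
        α * ∑ j, (if δ j ω = 2 then (1 : ℝ) else 0)) :
    (∫ ω, (∑ j, if δ j ω = 2 ∧ θ j ω = 1 then (1 : ℝ) else 0) /
        max (∑ j, if δ j ω = 2 then (1 : ℝ) else 0) 1 ∂P) ≤ α ∧
    (∫ ω, (∑ j, if δ j ω = 2 ∧ θ j ω = 1 then (1 : ℝ) else 0) ∂P) ≤
      α * ∫ ω, (∑ j, if δ j ω = 2 then (1 : ℝ) else 0) ∂P :=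
  budget_controls_FSR_and_mFSR_general P W hW θ hθmeas T hTmeas hTrange hTver δ hδmeas α hα hbudget
end
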